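/- Radial reduction of the weight-2ℓ Laplacian: let ℓ ∈ ℤ, fix w ∈ H², and let p : (0,∞) → ℂ be twice differentiable. For z = x + iy ∈ H² set ϱ = ϱ(z,w) = |z−w|²/(4·Im z·Im w) and define F(x,y) := p(ϱ(x+iy,w))·H_ℓ(x+iy,w). Then for every z = x + iy ∈ H² with z ≠ w: −y²·(∂²F/∂x² + ∂²F/∂y²)(x,y) + 2iℓy·(∂F/∂x)(x,y) = −[ (ϱ²+ϱ)·p″(ϱ) + (2ϱ+1)·p′(ϱ) + (ℓ²/(ϱ+1))·p(ϱ) ] · H_ℓ(z,w). -/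

import Mathlib

/-- The point-pair invariant ϱ(z,w) = |z−w|²/(4·Im z·Im w). -/
noncomputable def rhoInv (z w : ℂ) : ℝ :=
  ‖z - w‖ ^ 2 / (4 * z.im * w.im)

/-- The factor H_ℓ(z,w) = ((z̄−w)/(w̄−z))^ℓ. -/
noncomputable def Hfac (ℓ : ℤ) (z w : ℂ) : ℂ :=
  (((starRingEnd ℂ) z - w) / ((starRingEnd ℂ) w - z)) ^ ℓ

/-- The function F(x,y) = p(ϱ(x+iy,w))·H_ℓ(x+iy,w). -/
noncomputable def radialF (p : ℝ → ℂ) (ℓ : ℤ) (w : ℂ) (x y : ℝ) : ℂ :=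
  p (rhoInv ((x : ℂ) + (y : ℂ) * Complex.I) w) * Hfac ℓ ((x : ℂ) + (y : ℂ) * Complex.I) w

/-!
Along a horizontal or vertical line through `z = x + iy`, `F = (p ∘ ϱ) · H` with `H` satisfying
`H' = H g` for an explicit rational `g` (the logarithmic derivative of `H_ℓ`), so the product and
chain rules give `F'' = H (ϱ'² p''(ϱ) + (ϱ'' + 2 ϱ' g) p'(ϱ) + (g² + g') p(ϱ))`. Adding the two
directions, the coefficients of `p''`, `p'`, `p` are identified by elementary identities:
`y² |∇ϱ|² = ϱ² + ϱ`, `y² Δϱ = 2ϱ + 1`, the mixed term `y² ⟨∇ϱ, ∇ log H⟩ = iℓy ∂ₓϱ` cancels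
against the first-order part of `Ω_ℓ`, and the `p` coefficient reduces to `ℓ²/(ϱ + 1)`: the
second derivatives of `log H` cancel (it is harmonic, being `ℓ (log (z̄ - w) - log (w̄ - z))`) and
`ϱ + 1 = |z - w̄|² / (4 Im z Im w)`.
-/

open Complex Filter Topology

section ProductRule

variable {p p' : ℝ → ℂ} {r r' : ℝ → ℝ} {H g : ℝ → ℂ} {t ρ' r'' : ℝ} {π π'' γ g' : ℂ}

theorem hasDerivAt_comp_mul (hp : HasDerivAt p π (r t)) (hr : HasDerivAt r ρ' t)
    (hH : HasDerivAt H (H t * γ) t) :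
    HasDerivAt (fun s => p (r s) * H s) (H t * (ρ' * π + γ * p (r t))) t := by
  refine ((hp.scomp t hr).mul hH).congr_deriv ?_
  simp only [Function.comp_apply, real_smul]
  ring

theorem deriv_deriv_comp_mul (hp : ∀ᶠ u in 𝓝 (r t), HasDerivAt p (p' u) u)
    (hp' : HasDerivAt p' π'' (r t)) (hr : ∀ᶠ s in 𝓝 t, HasDerivAt r (r' s) s)
    (hr' : HasDerivAt r' r'' t) (hH : ∀ᶠ s in 𝓝 t, HasDerivAt H (H s * g s) s)
    (hg : HasDerivAt g g' t) :
    deriv (deriv fun s => p (r s) * H s) t =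
      H t * (r' t ^ 2 * π'' + (r'' + 2 * r' t * g t) * p' (r t) + (g t ^ 2 + g') * p (r t)) := by
  have hpr : ∀ᶠ s in 𝓝 t, HasDerivAt p (p' (r s)) (r s) :=
    hr.self_of_nhds.continuousAt.tendsto.eventually hp
  have hderiv : deriv (fun s => p (r s) * H s) =ᶠ[𝓝 t]
      fun s => H s * (r' s * p' (r s) + g s * p (r s)) := by
    filter_upwards [hpr, hr, hH] with s hps hrs hHs
    exact (hasDerivAt_comp_mul hps hrs hHs).deriv
  have hp'r := hp'.scomp t hr.self_of_nhds
  have hpr' := hpr.self_of_nhds.scomp t hr.self_of_nhds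
  rw [hderiv.deriv_eq]
  refine (hH.self_of_nhds.mul ((hr'.ofReal_comp.mul hp'r).add (hg.mul hpr'))).deriv.trans ?_
  simp only [Pi.add_apply, Pi.mul_apply, Function.comp_apply, real_smul]
  ring

end ProductRule

theorem HasDerivAt.div_zpow {𝕜 𝕜' : Type*} [NontriviallyNormedField 𝕜] [NontriviallyNormedField 𝕜']
    [NormedAlgebra 𝕜 𝕜'] {A C : 𝕜 → 𝕜'} {A' C' : 𝕜'} {t : 𝕜} (ℓ : ℤ)
    (hA : HasDerivAt A A' t) (hC : HasDerivAt C C' t) (hA0 : A t ≠ 0) (hC0 : C t ≠ 0) :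
    HasDerivAt (fun s => (A s / C s) ^ ℓ) ((A t / C t) ^ ℓ * (ℓ * (A' / A t - C' / C t))) t := by
  have hB0 : A t / C t ≠ 0 := div_ne_zero hA0 hC0
  refine ((hasDerivAt_zpow ℓ _ (Or.inl hB0)).comp t (hA.div hC hC0)).congr_deriv ?_
  rw [zpow_sub_one₀ hB0]
  field_simp

theorem rhoInv_pos {z w : ℂ} (hz : 0 < z.im) (hw : 0 < w.im) (h : z ≠ w) : 0 < rhoInv z w :=
  div_pos (pow_pos (norm_pos_iff.2 (sub_ne_zero.2 h)) 2) (by positivity)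

theorem rhoInv_ofReal_add_mul_I (w : ℂ) (x y : ℝ) :
    rhoInv (x + y * I) w = ((x - w.re) ^ 2 + (y - w.im) ^ 2) / (4 * y * w.im) := by
  rw [rhoInv, Complex.sq_norm, normSq_apply]
  simp [pow_two]

noncomputable def rhoDerivRe (w : ℂ) (x y : ℝ) : ℝ := (x - w.re) / (2 * y * w.im)

noncomputable def rhoDerivIm (w : ℂ) (x y : ℝ) : ℝ :=
  (y ^ 2 - w.im ^ 2 - (x - w.re) ^ 2) / (4 * w.im * y ^ 2)

theorem hasDerivAt_rhoInv_re (w : ℂ) (x y : ℝ) :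
    HasDerivAt (fun t : ℝ => rhoInv (t + y * I) w) (rhoDerivRe w x y) x := by
  simp only [rhoInv_ofReal_add_mul_I]
  refine (((((hasDerivAt_id x).sub_const w.re).pow 2).add_const _).div_const _).congr_deriv ?_
  simp only [rhoDerivRe, id]
  field_simp
  ring

theorem hasDerivAt_rhoInv_im (w : ℂ) (x : ℝ) {y : ℝ} (hw : w.im ≠ 0) (hy : y ≠ 0) :
    HasDerivAt (fun t : ℝ => rhoInv (x + t * I) w) (rhoDerivIm w x y) y := by
  simp only [rhoInv_ofReal_add_mul_I]
  have hnum := (((hasDerivAt_id y).sub_const w.im).pow 2).const_add ((x - w.re) ^ 2)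
  have hden := ((hasDerivAt_id y).const_mul 4).mul_const w.im
  refine (hnum.div hden (by simp [hy, hw])).congr_deriv ?_
  simp only [rhoDerivIm, id, Pi.pow_apply]
  field_simp
  ring

theorem hasDerivAt_rhoDerivRe (w : ℂ) (x y : ℝ) :
    HasDerivAt (fun t => rhoDerivRe w t y) (1 / (2 * y * w.im)) x :=
  ((hasDerivAt_id x).sub_const w.re).div_const _

theorem hasDerivAt_rhoDerivIm (w : ℂ) (x : ℝ) {y : ℝ} (hw : w.im ≠ 0) (hy : y ≠ 0) :
    HasDerivAt (fun t => rhoDerivIm w x t) (((x - w.re) ^ 2 + w.im ^ 2) / (2 * w.im * y ^ 3)) y := by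
  have hnum := ((hasDerivAt_pow 2 y).sub_const (w.im ^ 2)).sub_const ((x - w.re) ^ 2)
  have hden := (hasDerivAt_pow 2 y).const_mul (4 * w.im)
  refine (hnum.div hden (by simp [hy, hw])).congr_deriv ?_
  field_simp
  ring

theorem rhoInv_gradient_sq (w : ℂ) (x : ℝ) {y : ℝ} (hw : w.im ≠ 0) (hy : y ≠ 0) :
    y ^ 2 * (rhoDerivRe w x y ^ 2 + rhoDerivIm w x y ^ 2) =
      rhoInv (x + y * I) w ^ 2 + rhoInv (x + y * I) w := by
  rw [rhoInv_ofReal_add_mul_I, rhoDerivRe, rhoDerivIm]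
  field_simp
  ring

theorem rhoInv_laplacian (w : ℂ) (x : ℝ) {y : ℝ} (hw : w.im ≠ 0) (hy : y ≠ 0) :
    y ^ 2 * (1 / (2 * y * w.im) + ((x - w.re) ^ 2 + w.im ^ 2) / (2 * w.im * y ^ 3)) =
      2 * rhoInv (x + y * I) w + 1 := by
  rw [rhoInv_ofReal_add_mul_I]
  field_simp
  ring

theorem Hfac_ofReal_add_mul_I (ℓ : ℤ) (w : ℂ) (x y : ℝ) :
    Hfac ℓ (x + y * I) w =
      (((x - w.re) - (y + w.im) * I) / (-(x - w.re) - (y + w.im) * I)) ^ ℓ := by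
  rw [Hfac]
  congr 2 <;> apply Complex.ext <;> simp <;> ring

theorem sub_mul_I_ne_zero {a b : ℂ} (h : a ^ 2 + b ^ 2 ≠ 0) : a - b * I ≠ 0 :=
  left_ne_zero_of_mul (b := a + b * I) <| by
    rwa [show (a - b * I) * (a + b * I) = a ^ 2 + b ^ 2 by linear_combination -b ^ 2 * I_sq]

theorem neg_sub_mul_I_ne_zero {a b : ℂ} (h : a ^ 2 + b ^ 2 ≠ 0) : -a - b * I ≠ 0 :=
  sub_mul_I_ne_zero (by rwa [neg_sq])

theorem one_div_sub_mul_I_sub_neg_one_div (a b : ℂ) (h : a ^ 2 + b ^ 2 ≠ 0) :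
    1 / (a - b * I) - -1 / (-a - b * I) = 2 * I * b / (a ^ 2 + b ^ 2) := by
  rw [div_sub_div _ _ (sub_mul_I_ne_zero h) (neg_sub_mul_I_ne_zero h),
    div_eq_div_iff (mul_ne_zero (sub_mul_I_ne_zero h) (neg_sub_mul_I_ne_zero h)) h]
  linear_combination -2 * b ^ 3 * I * I_sq

theorem neg_I_div_sub_mul_I_sub_neg_I_div (a b : ℂ) (h : a ^ 2 + b ^ 2 ≠ 0) :
    -I / (a - b * I) - -I / (-a - b * I) = -2 * I * a / (a ^ 2 + b ^ 2) := by
  rw [div_sub_div _ _ (sub_mul_I_ne_zero h) (neg_sub_mul_I_ne_zero h),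
    div_eq_div_iff (mul_ne_zero (sub_mul_I_ne_zero h) (neg_sub_mul_I_ne_zero h)) h]
  linear_combination 2 * I * a * b ^ 2 * I_sq

noncomputable def hfacLogDerivRe (ℓ : ℤ) (w : ℂ) (x y : ℝ) : ℂ :=
  2 * I * ℓ * (y + w.im) / ((x - w.re) ^ 2 + (y + w.im) ^ 2)

noncomputable def hfacLogDerivIm (ℓ : ℤ) (w : ℂ) (x y : ℝ) : ℂ :=
  -2 * I * ℓ * (x - w.re) / ((x - w.re) ^ 2 + (y + w.im) ^ 2)

theorem ofReal_sub_sq_add_sq_ne_zero (w : ℂ) (x : ℝ) {y : ℝ} (hy : y + w.im ≠ 0) :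
    ((x : ℂ) - w.re) ^ 2 + ((y : ℂ) + w.im) ^ 2 ≠ 0 := by
  exact_mod_cast (add_pos_of_nonneg_of_pos (sq_nonneg (x - w.re)) (pow_two_pos_of_ne_zero hy)).ne'

theorem hasDerivAt_Hfac_re (ℓ : ℤ) (w : ℂ) (x : ℝ) {y : ℝ} (hy : y + w.im ≠ 0) :
    HasDerivAt (fun t : ℝ => Hfac ℓ (t + y * I) w)
      (Hfac ℓ (x + y * I) w * hfacLogDerivRe ℓ w x y) x := by
  have hD := ofReal_sub_sq_add_sq_ne_zero w x hy
  have hA : HasDerivAt (fun t : ℝ => ((t : ℂ) - w.re) - (y + w.im) * I) 1 x :=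
    (((hasDerivAt_id' _).sub_const _).sub_const _).comp_ofReal
  have hC : HasDerivAt (fun t : ℝ => -((t : ℂ) - w.re) - (y + w.im) * I) (-1) x :=
    (((hasDerivAt_id' _).sub_const _).neg.sub_const _).comp_ofReal
  simp only [Hfac_ofReal_add_mul_I]
  refine (hA.div_zpow ℓ hC (sub_mul_I_ne_zero hD) (neg_sub_mul_I_ne_zero hD)).congr_deriv ?_
  rw [one_div_sub_mul_I_sub_neg_one_div _ _ hD, hfacLogDerivRe]
  ring

theorem hasDerivAt_Hfac_im (ℓ : ℤ) (w : ℂ) (x : ℝ) {y : ℝ} (hy : y + w.im ≠ 0) :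
    HasDerivAt (fun t : ℝ => Hfac ℓ (x + t * I) w)
      (Hfac ℓ (x + y * I) w * hfacLogDerivIm ℓ w x y) y := by
  have hD := ofReal_sub_sq_add_sq_ne_zero w x hy
  have hA : HasDerivAt (fun t : ℝ => ((x : ℂ) - w.re) - (t + w.im) * I) (-I) y := by
    simpa using ((((hasDerivAt_id' _).add_const _).mul_const I).const_sub _).comp_ofReal
  have hC : HasDerivAt (fun t : ℝ => -((x : ℂ) - w.re) - (t + w.im) * I) (-I) y := by
    simpa using ((((hasDerivAt_id' _).add_const _).mul_const I).const_sub _).comp_ofReal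
  simp only [Hfac_ofReal_add_mul_I]
  refine (hA.div_zpow ℓ hC (sub_mul_I_ne_zero hD) (neg_sub_mul_I_ne_zero hD)).congr_deriv ?_
  rw [neg_I_div_sub_mul_I_sub_neg_I_div _ _ hD, hfacLogDerivIm]
  ring

theorem hasDerivAt_hfacLogDerivRe (ℓ : ℤ) (w : ℂ) (x : ℝ) {y : ℝ} (hy : y + w.im ≠ 0) :
    HasDerivAt (fun t => hfacLogDerivRe ℓ w t y)
      (-4 * I * ℓ * (x - w.re) * (y + w.im) / ((x - w.re) ^ 2 + (y + w.im) ^ 2) ^ 2) x := by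
  have hD := ofReal_sub_sq_add_sq_ne_zero w x hy
  have h : HasDerivAt (fun s : ℂ => 2 * I * ℓ * (y + w.im) / ((s - w.re) ^ 2 + (y + w.im) ^ 2))
      _ (x : ℂ) :=
    (hasDerivAt_const _ _).div ((((hasDerivAt_id' _).sub_const _).pow 2).add_const _) hD
  refine h.comp_ofReal.congr_deriv ?_
  field_simp
  ring

theorem hasDerivAt_hfacLogDerivIm (ℓ : ℤ) (w : ℂ) (x : ℝ) {y : ℝ} (hy : y + w.im ≠ 0) :
    HasDerivAt (fun t => hfacLogDerivIm ℓ w x t)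
      (4 * I * ℓ * (x - w.re) * (y + w.im) / ((x - w.re) ^ 2 + (y + w.im) ^ 2) ^ 2) y := by
  have hD := ofReal_sub_sq_add_sq_ne_zero w x hy
  have h : HasDerivAt (fun s : ℂ => -2 * I * ℓ * (x - w.re) / ((x - w.re) ^ 2 + (s + w.im) ^ 2))
      _ (y : ℂ) :=
    (hasDerivAt_const _ _).div ((((hasDerivAt_id' _).add_const _).pow 2).const_add _) hD
  refine h.comp_ofReal.congr_deriv ?_
  field_simp
  ring

theorem rhoInv_add_one (w : ℂ) (x : ℝ) {y : ℝ} (hw : w.im ≠ 0) (hy : y ≠ 0) :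
    rhoInv (x + y * I) w + 1 = ((x - w.re) ^ 2 + (y + w.im) ^ 2) / (4 * y * w.im) := by
  rw [rhoInv_ofReal_add_mul_I]
  field_simp
  ring

theorem rhoDeriv_mul_hfacLogDeriv (ℓ : ℤ) (w : ℂ) (x : ℝ) {y : ℝ} (hyw : y + w.im ≠ 0) :
    (y : ℂ) ^ 2 * (rhoDerivRe w x y * hfacLogDerivRe ℓ w x y +
        rhoDerivIm w x y * hfacLogDerivIm ℓ w x y) = I * ℓ * y * rhoDerivRe w x y := by
  have hD := ofReal_sub_sq_add_sq_ne_zero w x hyw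
  simp only [rhoDerivRe, rhoDerivIm, hfacLogDerivRe, hfacLogDerivIm]
  push_cast
  field_simp
  ring

theorem hfacLogDeriv_sq (ℓ : ℤ) (w : ℂ) (x : ℝ) {y : ℝ} (hw : w.im ≠ 0) (hy : y ≠ 0)
    (hyw : y + w.im ≠ 0) :
    (y : ℂ) ^ 2 * (hfacLogDerivRe ℓ w x y ^ 2 + hfacLogDerivIm ℓ w x y ^ 2) -
        2 * I * ℓ * y * hfacLogDerivRe ℓ w x y = ℓ ^ 2 / ((rhoInv (x + y * I) w : ℂ) + 1) := by
  have hD := ofReal_sub_sq_add_sq_ne_zero w x hyw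
  rw [← ofReal_one, ← ofReal_add, rhoInv_add_one w x hw hy, hfacLogDerivRe, hfacLogDerivIm]
  push_cast
  field_simp
  linear_combination -4 * y * w.im * ℓ ^ 2 * ((x - w.re) ^ 2 + (y + w.im) ^ 2) * I_sq

section RadialF

variable {p p' p'' : ℝ → ℂ} {ℓ : ℤ} {w : ℂ} {x y : ℝ}

theorem deriv_radialF_re {π : ℂ} (hp : HasDerivAt p π (rhoInv (x + y * I) w))
    (hyw : y + w.im ≠ 0) :
    deriv (fun t => radialF p ℓ w t y) x =
      Hfac ℓ (x + y * I) w * (rhoDerivRe w x y * π + hfacLogDerivRe ℓ w x y *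
        p (rhoInv (x + y * I) w)) :=
  (hasDerivAt_comp_mul (r := fun t => rhoInv (t + y * I) w) (H := fun t => Hfac ℓ (t + y * I) w)
    hp (hasDerivAt_rhoInv_re w x y) (hasDerivAt_Hfac_re ℓ w x hyw)).deriv

theorem deriv_deriv_radialF_re (hp : ∀ r, 0 < r → HasDerivAt p (p' r) r)
    (hp' : ∀ r, 0 < r → HasDerivAt p' (p'' r) r) (hyw : y + w.im ≠ 0)
    (hρ : 0 < rhoInv (x + y * I) w) :
    deriv (fun s => deriv (fun t => radialF p ℓ w t y) s) x =
      Hfac ℓ (x + y * I) w *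
        ((rhoDerivRe w x y : ℂ) ^ 2 * p'' (rhoInv (x + y * I) w) +
          (((1 / (2 * y * w.im) : ℝ) : ℂ) + 2 * rhoDerivRe w x y * hfacLogDerivRe ℓ w x y) *
            p' (rhoInv (x + y * I) w) +
          (hfacLogDerivRe ℓ w x y ^ 2 +
            -4 * I * ℓ * (x - w.re) * (y + w.im) / ((x - w.re) ^ 2 + (y + w.im) ^ 2) ^ 2) *
            p (rhoInv (x + y * I) w)) :=
  deriv_deriv_comp_mul (r := fun t => rhoInv (t + y * I) w) (r' := fun t => rhoDerivRe w t y)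
    (H := fun t => Hfac ℓ (t + y * I) w) (g := fun t => hfacLogDerivRe ℓ w t y)
    ((eventually_gt_nhds hρ).mono hp) (hp' _ hρ)
    (.of_forall fun t => hasDerivAt_rhoInv_re w t y) (hasDerivAt_rhoDerivRe w x y)
    (.of_forall fun t => hasDerivAt_Hfac_re ℓ w t hyw) (hasDerivAt_hfacLogDerivRe ℓ w x hyw)

theorem deriv_deriv_radialF_im (hp : ∀ r, 0 < r → HasDerivAt p (p' r) r)
    (hp' : ∀ r, 0 < r → HasDerivAt p' (p'' r) r) (hw : w.im ≠ 0) (hy : y ≠ 0) (hyw : y + w.im ≠ 0)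
    (hρ : 0 < rhoInv (x + y * I) w) :
    deriv (fun s => deriv (fun t => radialF p ℓ w x t) s) y =
      Hfac ℓ (x + y * I) w *
        ((rhoDerivIm w x y : ℂ) ^ 2 * p'' (rhoInv (x + y * I) w) +
          ((((x - w.re) ^ 2 + w.im ^ 2) / (2 * w.im * y ^ 3) : ℝ) +
            2 * rhoDerivIm w x y * hfacLogDerivIm ℓ w x y) * p' (rhoInv (x + y * I) w) +
          (hfacLogDerivIm ℓ w x y ^ 2 +
            4 * I * ℓ * (x - w.re) * (y + w.im) / ((x - w.re) ^ 2 + (y + w.im) ^ 2) ^ 2) *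
            p (rhoInv (x + y * I) w)) := by
  have hyw' : ∀ᶠ s in 𝓝 y, s + w.im ≠ 0 :=
    (continuous_add_const w.im).continuousAt.eventually_ne hyw
  exact deriv_deriv_comp_mul (r := fun t => rhoInv (x + t * I) w)
    (r' := fun t => rhoDerivIm w x t) (H := fun t => Hfac ℓ (x + t * I) w)
    (g := fun t => hfacLogDerivIm ℓ w x t)
    ((eventually_gt_nhds hρ).mono hp) (hp' _ hρ)
    ((eventually_ne_nhds hy).mono fun t ht => hasDerivAt_rhoInv_im w x hw ht)
    (hasDerivAt_rhoDerivIm w x hw hy)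
    (hyw'.mono fun t ht => hasDerivAt_Hfac_im ℓ w x ht) (hasDerivAt_hfacLogDerivIm ℓ w x hyw)

end RadialF

/-- Radial reduction of the weight-2ℓ Laplacian. -/
theorem radial_reduction_weight_laplacian (ℓ : ℤ) (w : ℂ) (hw : 0 < w.im)
    (p p' p'' : ℝ → ℂ)
    (hp : ∀ r : ℝ, 0 < r → HasDerivAt p (p' r) r)
    (hp' : ∀ r : ℝ, 0 < r → HasDerivAt p' (p'' r) r) :
    ∀ x y : ℝ, 0 < y → (x : ℂ) + (y : ℂ) * Complex.I ≠ w →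
      -(y : ℂ) ^ 2 *
            (deriv (fun x' : ℝ => deriv (fun x'' : ℝ => radialF p ℓ w x'' y) x') x +
              deriv (fun y' : ℝ => deriv (fun y'' : ℝ => radialF p ℓ w x y'') y') y) +
          2 * Complex.I * (ℓ : ℂ) * (y : ℂ) * deriv (fun x' : ℝ => radialF p ℓ w x' y) x =
        -((((rhoInv ((x : ℂ) + (y : ℂ) * Complex.I) w ^ 2 +
                  rhoInv ((x : ℂ) + (y : ℂ) * Complex.I) w : ℝ) : ℂ) *
                p'' (rhoInv ((x : ℂ) + (y : ℂ) * Complex.I) w) +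
              ((2 * rhoInv ((x : ℂ) + (y : ℂ) * Complex.I) w + 1 : ℝ) : ℂ) *
                p' (rhoInv ((x : ℂ) + (y : ℂ) * Complex.I) w) +
              (ℓ : ℂ) ^ 2 / (((rhoInv ((x : ℂ) + (y : ℂ) * Complex.I) w : ℝ) : ℂ) + 1) *
                p (rhoInv ((x : ℂ) + (y : ℂ) * Complex.I) w)) *
            Hfac ℓ ((x : ℂ) + (y : ℂ) * Complex.I) w) := by
  intro x y hy hzw
  have hρ : 0 < rhoInv (x + y * I) w := rhoInv_pos (by simpa using hy) hw hzw
  have hyw : y + w.im ≠ 0 := (add_pos hy hw).ne'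
  have hgrad := congrArg ((↑) : ℝ → ℂ) (rhoInv_gradient_sq w x hw.ne' hy.ne')
  have hlap := congrArg ((↑) : ℝ → ℂ) (rhoInv_laplacian w x hw.ne' hy.ne')
  push_cast at hgrad hlap
  rw [deriv_deriv_radialF_re hp hp' hyw hρ, deriv_deriv_radialF_im hp hp' hw.ne' hy.ne' hyw hρ,
    deriv_radialF_re (hp _ hρ) hyw]
  push_cast
  linear_combination -Hfac ℓ (x + y * I) w * (p'' (rhoInv (x + y * I) w) * hgrad +
    p' (rhoInv (x + y * I) w) * (hlap + 2 * rhoDeriv_mul_hfacLogDeriv ℓ w x hyw) +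
    p (rhoInv (x + y * I) w) * hfacLogDeriv_sq ℓ w x hw.ne' hy.ne' hyw)
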